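/- Let (Ω, μ) be a finite measure space and p ∈ (0,1). Let (w_k) be a sequence in L¹(Ω, μ) with w_k → w in L¹(Ω, μ), and let (ε_k) be a sequence of nonnegative reals with ε_k → ε ≥ 0. Then ∫_Ω ψ_{ε_k}(w_k(x)²) dμ(x) → ∫_Ω ψ_ε(w(x)²) dμ(x); in particular, for ε_k = ε = 0 this gives ∫_Ω |w_k|^p dμ → ∫_Ω |w|^p dμ. -/

import Mathlib

/-!
For `a, b ∈ ℝ` and `ε, δ ≥ 0` one has `|ψ_ε(a²) - ψ_δ(b²)| ≤ |a - b|^p + |ε - δ|^p`: in each of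
the variables `|a|` and `ε` separately, `ψ_ε(a²)` is monotone with increments at most
`(increment)^p`, since above the threshold it is the `p`-Hölder function `|a|^p` and below it is
a tangent line of the concave `t ↦ t^(p/2)`, whose slope is controlled there. Integrating, the
two integrals differ by at most `∫ |w_k - w|^p + μ(Ω) |ε_k - ε|^p`, and by Jensen's inequality
for the concave `x ↦ x^p` the mean of `|w_k - w|^p` is at most the `p`-th power of the mean of
`|w_k - w|`, which tends to `0`.
-/

open MeasureTheory Filter

noncomputable def psi (p ε t : ℝ) : ℝ :=
  if t < ε ^ 2 then (p / 2) * t * ε ^ (p - 2) + (1 - p / 2) * ε ^ p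
  else t ^ (p / 2)

open Real Set Topology

lemma abs_sub_le_of_monotoneOn_of_le_add {f g : ℝ → ℝ} {s : Set ℝ} (hf : MonotoneOn f s)
    (hfg : ∀ x ∈ s, ∀ y ∈ s, x ≤ y → f y ≤ f x + g (y - x)) {x y : ℝ} (hx : x ∈ s)
    (hy : y ∈ s) : |f x - f y| ≤ g |x - y| := by
  rcases le_total x y with hxy | hyx
  · rw [abs_sub_comm, abs_of_nonneg (sub_nonneg.2 (hf hx hy hxy)), abs_sub_comm,
      abs_of_nonneg (sub_nonneg.2 hxy)]
    linarith [hfg x hx y hy hxy]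
  · rw [abs_of_nonneg (sub_nonneg.2 (hf hy hx hyx)), abs_of_nonneg (sub_nonneg.2 hyx)]
    linarith [hfg y hy x hx hyx]

lemma rpow_le_rpow_add_rpow_sub {p a b : ℝ} (hp0 : 0 ≤ p) (hp1 : p ≤ 1) (ha : 0 ≤ a)
    (hab : a ≤ b) : b ^ p ≤ a ^ p + (b - a) ^ p := by
  simpa using rpow_add_le_add_rpow ha (sub_nonneg.2 hab) hp0 hp1

lemma rpow_sub_two_mul_sq {ε : ℝ} (hε : 0 < ε) (p : ℝ) : ε ^ (p - 2) * ε ^ 2 = ε ^ p := by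
  rw [← rpow_natCast, ← rpow_add hε]
  norm_num

lemma sq_rpow_half {a : ℝ} (ha : 0 ≤ a) (p : ℝ) : (a ^ 2) ^ (p / 2) = a ^ p := by
  rw [← rpow_natCast, ← rpow_mul ha]
  ring_nf

section psi

variable {p ε δ t a b : ℝ}

lemma pos_of_lt_sq (ht : 0 ≤ t) (hε : 0 ≤ ε) (h : t < ε ^ 2) : 0 < ε :=
  lt_of_pow_lt_pow_left₀ 2 hε (by rw [zero_pow two_ne_zero]; exact ht.trans_lt h)

lemma measurable_psi (p ε : ℝ) : Measurable (psi p ε) :=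
  Measurable.ite (measurableSet_lt measurable_id measurable_const) (by fun_prop) (by fun_prop)

lemma psi_of_lt (h : t < ε ^ 2) :
    psi p ε t = (p / 2) * t * ε ^ (p - 2) + (1 - p / 2) * ε ^ p :=
  if_pos h

lemma psi_of_le (h : ε ^ 2 ≤ t) : psi p ε t = t ^ (p / 2) :=
  if_neg h.not_gt

lemma psi_sq_of_le (hε : 0 ≤ ε) (h : ε ≤ a) : psi p ε (a ^ 2) = a ^ p := by
  rw [psi_of_le (pow_le_pow_left₀ hε h 2), sq_rpow_half (hε.trans h)]

/-- `ψ_ε` is `t ↦ t^(p/2)` on `[ε², ∞)` continued below `ε²` by its tangent line at `ε²`, which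
lies above the concave function `t ↦ t^(p/2)`. -/
lemma rpow_le_psi (hp0 : 0 ≤ p) (hp2 : p ≤ 2) (hε : 0 ≤ ε) (ht : 0 ≤ t) :
    t ^ (p / 2) ≤ psi p ε t := by
  by_cases h : t < ε ^ 2
  · have hε0 : 0 < ε := pos_of_lt_sq ht hε h
    have hε2 : 0 < ε ^ 2 := by positivity
    have bernoulli := rpow_one_add_le_one_add_mul_self (s := t / ε ^ 2 - 1)
      (by linarith [div_nonneg ht hε2.le]) (by linarith : 0 ≤ p / 2) (by linarith)
    rw [add_sub_cancel, div_rpow ht hε2.le, sq_rpow_half hε, div_le_iff₀ (by positivity)]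
      at bernoulli
    rw [psi_of_lt h]
    have hc := rpow_sub_two_mul_sq hε0 p
    calc t ^ (p / 2) ≤ (1 + p / 2 * (t / ε ^ 2 - 1)) * ε ^ p := bernoulli
      _ = _ := by
        rw [← hc]
        field_simp
        ring
  · rw [psi_of_le (not_lt.1 h)]

lemma rpow_le_psi_sq (hp0 : 0 ≤ p) (hp2 : p ≤ 2) (hε : 0 ≤ ε) (ha : 0 ≤ a) :
    a ^ p ≤ psi p ε (a ^ 2) := by
  simpa only [sq_rpow_half ha] using rpow_le_psi hp0 hp2 hε (sq_nonneg a)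

lemma monotoneOn_psi (hp0 : 0 ≤ p) (hε : 0 ≤ ε) : MonotoneOn (psi p ε) (Ici 0) := by
  intro t ht t' ht' htt'
  by_cases h' : t' < ε ^ 2
  · rw [psi_of_lt h', psi_of_lt (htt'.trans_lt h')]
    have : 0 ≤ ε ^ (p - 2) := rpow_nonneg hε _
    gcongr
  · rw [psi_of_le (not_lt.1 h')]
    by_cases h : t < ε ^ 2
    · rw [psi_of_lt h]
      have hc := rpow_sub_two_mul_sq (pos_of_lt_sq ht hε h) p
      have h1 : ε ^ p ≤ t' ^ (p / 2) := by
        rw [← sq_rpow_half hε p]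
        exact rpow_le_rpow (sq_nonneg ε) (not_lt.1 h') (by linarith)
      have h2 : p / 2 * t * ε ^ (p - 2) ≤ p / 2 * ε ^ p := by
        rw [← hc, mul_assoc, mul_comm t]
        have := rpow_nonneg hε (p - 2)
        gcongr
      linarith
    · rw [psi_of_le (not_lt.1 h)]
      exact rpow_le_rpow ht htt' (by linarith)

lemma psi_sq_le_psi_sq_add_rpow_sub (hp0 : 0 ≤ p) (hp1 : p ≤ 1) (hε : 0 ≤ ε) (ha : 0 ≤ a)
    (hab : a ≤ b) : psi p ε (b ^ 2) ≤ psi p ε (a ^ 2) + (b - a) ^ p := by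
  rcases le_or_gt ε b with hεb | hbε
  · rw [psi_sq_of_le hε hεb]
    linarith [rpow_le_rpow_add_rpow_sub hp0 hp1 ha hab, rpow_le_psi_sq hp0 (by linarith) hε ha]
  rcases hab.eq_or_lt with rfl | hab
  · simp [rpow_nonneg]
  have hε0 : 0 < ε := ha.trans_lt (hab.trans hbε)
  rw [psi_of_lt (by nlinarith), psi_of_lt (by nlinarith)]
  -- the slope of the tangent part at `b < ε` is at most `p ε^(p-1) ≤ p (b - a)^(p-1)`
  have hd : 0 < b - a := sub_pos.2 hab
  have hslope : ε ^ (p - 1) ≤ (b - a) ^ (p - 1) :=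
    rpow_le_rpow_of_nonpos hd (by linarith) (by linarith)
  have hε1 : ε ^ (p - 2) * ε = ε ^ (p - 1) := by
    rw [← rpow_add_one hε0.ne']; ring_nf
  have hd1 : (b - a) ^ (p - 1) * (b - a) = (b - a) ^ p := by
    rw [← rpow_add_one hd.ne']; ring_nf
  have hX := rpow_nonneg hε0.le (p - 2)
  calc p / 2 * b ^ 2 * ε ^ (p - 2) + (1 - p / 2) * ε ^ p
      = p / 2 * a ^ 2 * ε ^ (p - 2) + (1 - p / 2) * ε ^ p
        + p / 2 * ((b + a) * (b - a)) * ε ^ (p - 2) := by ring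
    _ ≤ p / 2 * a ^ 2 * ε ^ (p - 2) + (1 - p / 2) * ε ^ p
        + p / 2 * ((2 * ε) * (b - a)) * ε ^ (p - 2) := by gcongr; linarith
    _ = p / 2 * a ^ 2 * ε ^ (p - 2) + (1 - p / 2) * ε ^ p + p * (b - a) * ε ^ (p - 1) := by
        rw [← hε1]; ring
    _ ≤ p / 2 * a ^ 2 * ε ^ (p - 2) + (1 - p / 2) * ε ^ p
        + 1 * (b - a) * (b - a) ^ (p - 1) := by gcongr
    _ = p / 2 * a ^ 2 * ε ^ (p - 2) + (1 - p / 2) * ε ^ p + (b - a) ^ p := by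
        rw [← hd1]; ring

lemma monotoneOn_psi_param (hp0 : 0 ≤ p) (hp2 : p ≤ 2) (ht : 0 ≤ t) :
    MonotoneOn (fun ε => psi p ε t) (Ici 0) := by
  intro δ hδ ε hε hδε
  show psi p δ t ≤ psi p ε t
  rcases hδε.eq_or_lt with rfl | hδε
  · rfl
  by_cases hδt : δ ^ 2 ≤ t
  · rw [psi_of_le hδt]
    exact rpow_le_psi hp0 hp2 hε ht
  rw [not_le] at hδt
  have hδ0 : 0 < δ := pos_of_lt_sq ht hδ hδt
  have hδε2 : δ ^ 2 < ε ^ 2 := by gcongr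
  -- compare both tangent lines at `δ²`, where the one of `ψ_ε` lies above `δ^p`
  have hδ := rpow_le_psi hp0 hp2 hε (sq_nonneg δ)
  rw [sq_rpow_half hδ0.le, psi_of_lt hδε2] at hδ
  rw [psi_of_lt hδt, psi_of_lt (hδt.trans hδε2)]
  have hslope : ε ^ (p - 2) ≤ δ ^ (p - 2) :=
    rpow_le_rpow_of_nonpos hδ0 hδε.le (by linarith)
  have hc := rpow_sub_two_mul_sq hδ0 p
  have : 0 ≤ p / 2 * (δ ^ 2 - t) * (δ ^ (p - 2) - ε ^ (p - 2)) := by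
    apply mul_nonneg (mul_nonneg _ _) _ <;> linarith
  nlinarith

lemma psi_sq_le_psi_sq_add_rpow_sub_param (hp0 : 0 ≤ p) (hp1 : p ≤ 1) (hδ : 0 ≤ δ)
    (hδε : δ ≤ ε) (ha : 0 ≤ a) : psi p ε (a ^ 2) ≤ psi p δ (a ^ 2) + (ε - δ) ^ p := by
  have hε : 0 ≤ ε := hδ.trans hδε
  have hεδ : ε ^ p ≤ δ ^ p + (ε - δ) ^ p := rpow_le_rpow_add_rpow_sub hp0 hp1 hδ hδε
  rcases le_or_gt ε a with hεa | haε
  · rw [psi_sq_of_le hε hεa, psi_sq_of_le hδ (hδε.trans hεa)]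
    linarith [rpow_nonneg (sub_nonneg.2 hδε) p]
  have hψε : psi p ε (a ^ 2) ≤ ε ^ p := by
    rw [← psi_sq_of_le (p := p) hε le_rfl]
    exact monotoneOn_psi hp0 hε (sq_nonneg a) (sq_nonneg ε) (by gcongr)
  rcases le_or_gt δ a with hδa | haδ
  · rw [psi_sq_of_le hδ hδa]
    have : (ε - a) ^ p ≤ (ε - δ) ^ p := rpow_le_rpow (by linarith) (by linarith) hp0
    linarith [rpow_le_rpow_add_rpow_sub hp0 hp1 ha haε.le]
  have hδ0 : 0 < δ := ha.trans_lt haδ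
  rw [psi_of_lt (by gcongr), psi_of_lt (by nlinarith)]
  have hslope : ε ^ (p - 2) ≤ δ ^ (p - 2) :=
    rpow_le_rpow_of_nonpos hδ0 hδε (by linarith)
  have hmono : δ ^ p ≤ ε ^ p := rpow_le_rpow hδ hδε hp0
  have : p / 2 * a ^ 2 * ε ^ (p - 2) ≤ p / 2 * a ^ 2 * δ ^ (p - 2) := by gcongr
  nlinarith

lemma abs_psi_sq_sub_psi_sq_le (hp0 : 0 ≤ p) (hp1 : p ≤ 1) (hε : 0 ≤ ε) (hδ : 0 ≤ δ) (a b : ℝ) :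
    |psi p ε (a ^ 2) - psi p δ (b ^ 2)| ≤ |a - b| ^ p + |ε - δ| ^ p := by
  have harg : |psi p ε (|a| ^ 2) - psi p ε (|b| ^ 2)| ≤ |(|a| - |b|)| ^ p :=
    abs_sub_le_of_monotoneOn_of_le_add (g := (· ^ p))
      (fun x hx y hy hxy => monotoneOn_psi hp0 hε (sq_nonneg x) (sq_nonneg y)
        (pow_le_pow_left₀ hx hxy 2))
      (fun x hx y _ hxy => psi_sq_le_psi_sq_add_rpow_sub hp0 hp1 hε hx hxy)
      (abs_nonneg a) (abs_nonneg b)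
  have hparam : |psi p ε (|b| ^ 2) - psi p δ (|b| ^ 2)| ≤ |ε - δ| ^ p :=
    abs_sub_le_of_monotoneOn_of_le_add (f := fun ε => psi p ε (|b| ^ 2)) (g := (· ^ p))
      (monotoneOn_psi_param hp0 (by linarith) (sq_nonneg _))
      (fun x hx y _ hxy => psi_sq_le_psi_sq_add_rpow_sub_param hp0 hp1 hx hxy (abs_nonneg b))
      hε hδ
  have habs : |(|a| - |b|)| ^ p ≤ |a - b| ^ p :=
    rpow_le_rpow (abs_nonneg _) (abs_abs_sub_abs_le_abs_sub a b) hp0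
  rw [← sq_abs a, ← sq_abs b]
  calc _ ≤ |psi p ε (|a| ^ 2) - psi p ε (|b| ^ 2)| + |psi p ε (|b| ^ 2) - psi p δ (|b| ^ 2)| :=
        abs_sub_le _ _ _
    _ ≤ _ := by linarith

end psi

section integral

variable {Ω ι : Type*} [MeasurableSpace Ω] {μ : Measure Ω} {p : ℝ}

lemma MeasureTheory.Integrable.abs_rpow [IsFiniteMeasure μ] {f : Ω → ℝ} (hf : Integrable f μ)
    (hp0 : 0 ≤ p) (hp1 : p ≤ 1) : Integrable (fun x => |f x| ^ p) μ := by
  have hmem : MemLp f (ENNReal.ofReal p) μ :=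
    (memLp_one_iff_integrable.2 hf).mono_exponent (ENNReal.ofReal_le_one.2 hp1)
  simpa [ENNReal.toReal_ofReal hp0] using hmem.integrable_norm_rpow'

lemma average_abs_rpow_le [IsFiniteMeasure μ] {f : Ω → ℝ} (hf : Integrable f μ) (hp0 : 0 ≤ p)
    (hp1 : p ≤ 1) : ⨍ x, |f x| ^ p ∂μ ≤ (⨍ x, |f x| ∂μ) ^ p := by
  rcases eq_zero_or_neZero μ with rfl | _
  · simpa using rpow_nonneg le_rfl p
  exact (concaveOn_rpow hp0 hp1).le_map_average
    (continuousOn_id.rpow_const fun _ _ => Or.inr hp0) isClosed_Ici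
    (ae_of_all _ fun x => abs_nonneg (f x)) hf.abs (hf.abs_rpow hp0 hp1)

lemma tendsto_integral_abs_rpow_zero [IsFiniteMeasure μ] {l : Filter ι} {f : ι → Ω → ℝ}
    (hf : ∀ i, Integrable (f i) μ) (hp0 : 0 < p) (hp1 : p ≤ 1)
    (h : Tendsto (fun i => ∫ x, |f i x| ∂μ) l (𝓝 0)) :
    Tendsto (fun i => ∫ x, |f i x| ^ p ∂μ) l (𝓝 0) := by
  have havg : Tendsto (fun i => (⨍ x, |f i x| ∂μ) ^ p) l (𝓝 0) := by
    simp_rw [average_eq, smul_eq_mul]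
    simpa [zero_rpow hp0.ne'] using (h.const_mul _).rpow_const (Or.inr hp0.le)
  refine squeeze_zero (fun i => integral_nonneg fun x => rpow_nonneg (abs_nonneg _) p)
    (fun i => ?_) (by simpa using havg.const_mul (μ.real univ))
  rw [← measure_smul_average, smul_eq_mul]
  gcongr
  exact average_abs_rpow_le (hf i) hp0.le hp1

lemma tendsto_integral_of_abs_sub_le {l : Filter ι} {F B : ι → Ω → ℝ} {G : Ω → ℝ}
    (hF : ∀ i, Integrable (F i) μ) (hG : Integrable G μ) (hB : ∀ i, Integrable (B i) μ)
    (hFG : ∀ i, ∀ᵐ x ∂μ, |F i x - G x| ≤ B i x)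
    (hB0 : Tendsto (fun i => ∫ x, B i x ∂μ) l (𝓝 0)) :
    Tendsto (fun i => ∫ x, F i x ∂μ) l (𝓝 (∫ x, G x ∂μ)) := by
  rw [tendsto_iff_norm_sub_tendsto_zero]
  refine squeeze_zero (fun i => norm_nonneg _) (fun i => ?_) hB0
  rw [← integral_sub (hF i) hG]
  exact (norm_integral_le_integral_norm _).trans
    (integral_mono_ae ((hF i).sub hG).norm (hB i) (hFG i))

lemma integrable_psi_sq [IsFiniteMeasure μ] (hp0 : 0 < p) (hp1 : p ≤ 1) {ε : ℝ} (hε : 0 ≤ ε)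
    {f : Ω → ℝ} (hf : Integrable f μ) : Integrable (fun x => psi p ε (f x ^ 2)) μ := by
  refine Integrable.mono' ((hf.abs_rpow hp0.le hp1).add (integrable_const (ε ^ p)))
    ((measurable_psi p ε).comp_aemeasurable (hf.aemeasurable.pow_const 2)).aestronglyMeasurable
    (ae_of_all _ fun x => ?_)
  have h := abs_psi_sq_sub_psi_sq_le hp0.le hp1 hε le_rfl (f x) 0
  rw [psi_sq_of_le le_rfl le_rfl, zero_rpow hp0.ne'] at h
  simpa [abs_of_nonneg hε] using h

end integral

theorem integral_psi_tendsto {Ω : Type*} [MeasurableSpace Ω] (μ : Measure Ω)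
    [IsFiniteMeasure μ] (p : ℝ) (hp : p ∈ Set.Ioo (0 : ℝ) 1)
    (wk : ℕ → Ω → ℝ) (w : Ω → ℝ)
    (hwk : ∀ k, Integrable (wk k) μ) (hw : Integrable w μ)
    (hL1 : Tendsto (fun k => ∫ x, |wk k x - w x| ∂μ) atTop (nhds 0))
    (ε : ℕ → ℝ) (εlim : ℝ) (hε : ∀ k, 0 ≤ ε k) (hεlim : 0 ≤ εlim)
    (hεconv : Tendsto ε atTop (nhds εlim)) :
    Tendsto (fun k => ∫ x, psi p (ε k) ((wk k x) ^ 2) ∂μ) atTop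
      (nhds (∫ x, psi p εlim ((w x) ^ 2) ∂μ)) := by
  obtain ⟨hp0, hp1⟩ := hp
  have hdiff : ∀ k, Integrable (fun x => wk k x - w x) μ := fun k => (hwk k).sub hw
  have hεp : Tendsto (fun k => |ε k - εlim| ^ p) atTop (𝓝 0) := by
    simpa [zero_rpow hp0.ne'] using
      (hεconv.sub_const εlim).abs.rpow_const (Or.inr hp0.le)
  refine tendsto_integral_of_abs_sub_le (B := fun k x => |wk k x - w x| ^ p + |ε k - εlim| ^ p)
    (fun k => integrable_psi_sq hp0 hp1.le (hε k) (hwk k)) (integrable_psi_sq hp0 hp1.le hεlim hw)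
    (fun k => ((hdiff k).abs_rpow hp0.le hp1.le).add (integrable_const _))
    (fun k => ae_of_all _ fun x => abs_psi_sq_sub_psi_sq_le hp0.le hp1.le (hε k) hεlim _ _) ?_
  simp_rw [integral_add ((hdiff _).abs_rpow hp0.le hp1.le) (integrable_const _), integral_const,
    smul_eq_mul]
  simpa using (tendsto_integral_abs_rpow_zero hdiff hp0 hp1.le hL1).add (hεp.const_mul _)
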